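/- Let I be a countable index set. The map sending H to the sequence (log(l_H(C_i)/l_{H₀}(C_i)), l_H(C_i)θ_H(C_i) − l_{H₀}(C_i)θ_{H₀}(C_i))_{i∈I} is an isometric bijection from the Fenchel-Nielsen Teichmüller space (functions (l,θ) : I → ℝ_{>0} × ℝ at finite d_FN-distance from a basepoint (l₀,θ₀)) onto ℓ^∞; consequently the Fenchel-Nielsen metric d_FN is complete. -/

import Mathlib

open Real Filter

/-- The Fenchel-Nielsen distance between two pairs of (length, twist) functions. -/
noncomputable def dFN {I : Type*} (p q : (I → ℝ) × (I → ℝ)) : ℝ :=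
  ⨆ i, max |Real.log (p.1 i / q.1 i)| |p.1 i * p.2 i - q.1 i * q.2 i|

/-- The Fenchel-Nielsen Teichmüller space based at `(l₀, θ₀)`. -/
def TFN {I : Type*} (l₀ θ₀ : I → ℝ) : Set ((I → ℝ) × (I → ℝ)) :=
  {p | (∀ i, 0 < p.1 i) ∧
    BddAbove (Set.range fun i =>
      max |Real.log (p.1 i / l₀ i)| |p.1 i * p.2 i - l₀ i * θ₀ i|)}

/-- The coordinate map to `ℓ^∞(I, ℝ × ℝ)`. -/
noncomputable def FNmap {I : Type*} (l₀ θ₀ : I → ℝ) (p : (I → ℝ) × (I → ℝ)) :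
    I → ℝ × ℝ :=
  fun i => (Real.log (p.1 i / l₀ i), p.1 i * p.2 i - l₀ i * θ₀ i)

/-!
In the coordinates `(log (l / l₀), l θ - l₀ θ₀)` the summand of `d_FN` at `i` is exactly the
max-norm of the difference of the `i`-th coordinates, because `log (l / l₀) - log (l' / l₀) =
log (l / l')`. So `d_FN` is the `ℓ^∞` distance of the coordinates; the map is inverted
explicitly by `l = l₀ eᵃ`, `θ = (b + l₀ θ₀) / l`, and completeness is transported from `ℓ^∞`.
-/

namespace FenchelNielsen

variable {I : Type*} (l₀ θ₀ : I → ℝ)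

lemma norm_FNmap_apply (p : (I → ℝ) × (I → ℝ)) (i : I) :
    ‖FNmap l₀ θ₀ p i‖ = max |log (p.1 i / l₀ i)| |p.1 i * p.2 i - l₀ i * θ₀ i| := by
  simp [FNmap, Prod.norm_def]

lemma memℓp_FNmap_iff (p : (I → ℝ) × (I → ℝ)) :
    Memℓp (FNmap l₀ θ₀ p) ⊤ ↔
      BddAbove (Set.range fun i => max |log (p.1 i / l₀ i)| |p.1 i * p.2 i - l₀ i * θ₀ i|) := by
  simp only [memℓp_infty_iff, norm_FNmap_apply]

lemma mem_TFN_iff (p : (I → ℝ) × (I → ℝ)) :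
    p ∈ TFN l₀ θ₀ ↔ (∀ i, 0 < p.1 i) ∧ Memℓp (FNmap l₀ θ₀ p) ⊤ := by
  rw [memℓp_FNmap_iff]
  rfl

variable {l₀ θ₀}

lemma memℓp_FNmap {p : (I → ℝ) × (I → ℝ)} (hp : p ∈ TFN l₀ θ₀) : Memℓp (FNmap l₀ θ₀ p) ⊤ :=
  ((mem_TFN_iff l₀ θ₀ p).1 hp).2

lemma norm_FNmap_sub_apply (hl₀ : ∀ i, 0 < l₀ i) {p q : (I → ℝ) × (I → ℝ)}
    (hp : ∀ i, 0 < p.1 i) (hq : ∀ i, 0 < q.1 i) (i : I) :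
    ‖FNmap l₀ θ₀ p i - FNmap l₀ θ₀ q i‖ =
      max |log (p.1 i / q.1 i)| |p.1 i * p.2 i - q.1 i * q.2 i| := by
  have hlog : log (p.1 i / l₀ i) - log (q.1 i / l₀ i) = log (p.1 i / q.1 i) := by
    rw [log_div (hp i).ne' (hl₀ i).ne', log_div (hq i).ne' (hl₀ i).ne',
      log_div (hp i).ne' (hq i).ne']
    ring
  have hprod : (p.1 i * p.2 i - l₀ i * θ₀ i) - (q.1 i * q.2 i - l₀ i * θ₀ i) =
      p.1 i * p.2 i - q.1 i * q.2 i := by ring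
  simp only [FNmap, Prod.norm_def, Prod.fst_sub, Prod.snd_sub, hlog, hprod, norm_eq_abs]

lemma dFN_eq_iSup_norm_FNmap_sub (hl₀ : ∀ i, 0 < l₀ i) {p q : (I → ℝ) × (I → ℝ)}
    (hp : ∀ i, 0 < p.1 i) (hq : ∀ i, 0 < q.1 i) :
    dFN p q = ⨆ i, ‖FNmap l₀ θ₀ p i - FNmap l₀ θ₀ q i‖ :=
  iSup_congr fun i => (norm_FNmap_sub_apply hl₀ hp hq i).symm

lemma FNmap_injOn (hl₀ : ∀ i, 0 < l₀ i) : Set.InjOn (FNmap l₀ θ₀) (TFN l₀ θ₀) := by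
  intro p hp q hq h
  have hl : ∀ i, p.1 i = q.1 i := fun i => by
    have hlog : log (p.1 i / l₀ i) = log (q.1 i / l₀ i) := congrArg (fun f => (f i).1) h
    have := log_injOn_pos (div_pos (hp.1 i) (hl₀ i)) (div_pos (hq.1 i) (hl₀ i)) hlog
    rwa [div_left_inj' (hl₀ i).ne'] at this
  have hθ : ∀ i, p.2 i = q.2 i := fun i => by
    have hprod : p.1 i * p.2 i - l₀ i * θ₀ i = q.1 i * q.2 i - l₀ i * θ₀ i :=
      congrArg (fun f => (f i).2) h
    rw [hl i, sub_left_inj] at hprod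
    exact mul_left_cancel₀ (hq.1 i).ne' hprod
  exact Prod.ext (funext hl) (funext hθ)

variable (l₀ θ₀)

noncomputable def FNinv (f : I → ℝ × ℝ) : (I → ℝ) × (I → ℝ) :=
  (fun i => l₀ i * exp (f i).1, fun i => ((f i).2 + l₀ i * θ₀ i) / (l₀ i * exp (f i).1))

variable {l₀ θ₀}

lemma FNmap_FNinv (hl₀ : ∀ i, 0 < l₀ i) (f : I → ℝ × ℝ) : FNmap l₀ θ₀ (FNinv l₀ θ₀ f) = f := by
  funext i
  have hl : l₀ i * exp (f i).1 ≠ 0 := (mul_pos (hl₀ i) (exp_pos _)).ne'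
  simp only [FNmap, FNinv, mul_div_cancel_left₀ _ (hl₀ i).ne', log_exp,
    mul_div_cancel₀ _ hl, add_sub_cancel_right]

lemma FNinv_mem_TFN (hl₀ : ∀ i, 0 < l₀ i) {f : I → ℝ × ℝ} (hf : Memℓp f ⊤) :
    FNinv l₀ θ₀ f ∈ TFN l₀ θ₀ := by
  refine (mem_TFN_iff l₀ θ₀ _).2 ⟨fun i => mul_pos (hl₀ i) (exp_pos _), ?_⟩
  rwa [FNmap_FNinv hl₀]

noncomputable def toLp {p : (I → ℝ) × (I → ℝ)} (hp : p ∈ TFN l₀ θ₀) :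
    lp (fun _ : I => ℝ × ℝ) ⊤ :=
  ⟨FNmap l₀ θ₀ p, memℓp_FNmap hp⟩

lemma dFN_eq_dist_toLp (hl₀ : ∀ i, 0 < l₀ i) {p q : (I → ℝ) × (I → ℝ)}
    (hp : p ∈ TFN l₀ θ₀) (hq : q ∈ TFN l₀ θ₀) : dFN p q = dist (toLp hp) (toLp hq) := by
  rw [dist_eq_norm, lp.norm_eq_ciSup, dFN_eq_iSup_norm_FNmap_sub hl₀ hp.1 hq.1]
  rfl

lemma exists_tendsto_dFN_of_cauchy (hl₀ : ∀ i, 0 < l₀ i) {x : ℕ → (I → ℝ) × (I → ℝ)}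
    (hx : ∀ n, x n ∈ TFN l₀ θ₀) (hcau : ∀ ε > 0, ∃ N, ∀ n > N, ∀ m > N, dFN (x n) (x m) < ε) :
    ∃ p ∈ TFN l₀ θ₀, Tendsto (fun n => dFN (x n) p) atTop (nhds 0) := by
  have hy : CauchySeq fun n => toLp (hx n) := by
    refine Metric.cauchySeq_iff.2 fun ε hε => ?_
    obtain ⟨N, hN⟩ := hcau ε hε
    exact ⟨N + 1, fun m hm n hn => by
      rw [← dFN_eq_dist_toLp hl₀]
      exact hN m (by omega) n (by omega)⟩
  obtain ⟨g, hg⟩ := cauchySeq_tendsto_of_complete hy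
  have hp : FNinv l₀ θ₀ g ∈ TFN l₀ θ₀ := FNinv_mem_TFN hl₀ (lp.memℓp g)
  have hgp : toLp hp = g := Subtype.ext (FNmap_FNinv hl₀ g)
  refine ⟨_, hp, ?_⟩
  simp_rw [dFN_eq_dist_toLp hl₀ (hx _) hp, hgp]
  exact tendsto_iff_dist_tendsto_zero.1 hg

end FenchelNielsen

theorem FN_isometric_bijection_and_complete_general {I : Type*}
    (l₀ θ₀ : I → ℝ) (hl₀ : ∀ i, 0 < l₀ i) :
    (∀ p ∈ TFN l₀ θ₀, Memℓp (FNmap l₀ θ₀ p) ⊤) ∧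
    (∀ f : I → ℝ × ℝ, Memℓp f ⊤ → ∃ p ∈ TFN l₀ θ₀, FNmap l₀ θ₀ p = f) ∧
    (∀ p ∈ TFN l₀ θ₀, ∀ q ∈ TFN l₀ θ₀, FNmap l₀ θ₀ p = FNmap l₀ θ₀ q → p = q) ∧
    (∀ p ∈ TFN l₀ θ₀, ∀ q ∈ TFN l₀ θ₀,
      dFN p q = ⨆ i, ‖FNmap l₀ θ₀ p i - FNmap l₀ θ₀ q i‖) ∧
    (∀ x : ℕ → (I → ℝ) × (I → ℝ), (∀ n, x n ∈ TFN l₀ θ₀) →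
      (∀ ε > 0, ∃ N, ∀ n > N, ∀ m > N, dFN (x n) (x m) < ε) →
      ∃ p ∈ TFN l₀ θ₀, Tendsto (fun n => dFN (x n) p) atTop (nhds 0)) :=
  ⟨fun _ => FenchelNielsen.memℓp_FNmap,
    fun f hf => ⟨FenchelNielsen.FNinv l₀ θ₀ f, FenchelNielsen.FNinv_mem_TFN hl₀ hf,
      FenchelNielsen.FNmap_FNinv hl₀ f⟩,
    fun _ hp _ hq => FenchelNielsen.FNmap_injOn hl₀ hp hq,
    fun _ hp _ hq => FenchelNielsen.dFN_eq_iSup_norm_FNmap_sub hl₀ hp.1 hq.1,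
    fun _ => FenchelNielsen.exists_tendsto_dFN_of_cauchy hl₀⟩

/-- The Fenchel-Nielsen coordinate map is an isometric bijection onto `ℓ^∞`, and
consequently the Fenchel-Nielsen metric is complete. -/
theorem FN_isometric_bijection_and_complete {I : Type*} [Countable I]
    (l₀ θ₀ : I → ℝ) (hl₀ : ∀ i, 0 < l₀ i) :
    (∀ p ∈ TFN l₀ θ₀, Memℓp (FNmap l₀ θ₀ p) ⊤) ∧
    (∀ f : I → ℝ × ℝ, Memℓp f ⊤ → ∃ p ∈ TFN l₀ θ₀, FNmap l₀ θ₀ p = f) ∧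
    (∀ p ∈ TFN l₀ θ₀, ∀ q ∈ TFN l₀ θ₀, FNmap l₀ θ₀ p = FNmap l₀ θ₀ q → p = q) ∧
    (∀ p ∈ TFN l₀ θ₀, ∀ q ∈ TFN l₀ θ₀,
      dFN p q = ⨆ i, ‖FNmap l₀ θ₀ p i - FNmap l₀ θ₀ q i‖) ∧
    (∀ x : ℕ → (I → ℝ) × (I → ℝ), (∀ n, x n ∈ TFN l₀ θ₀) →
      (∀ ε > 0, ∃ N, ∀ n > N, ∀ m > N, dFN (x n) (x m) < ε) →
      ∃ p ∈ TFN l₀ θ₀, Tendsto (fun n => dFN (x n) p) atTop (nhds 0)) :=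
  FN_isometric_bijection_and_complete_general l₀ θ₀ hl₀
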